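/- For c ∈ (0,1), a_z ∈ [-1,1], the function ρ_a(t) := (1 + G(t)·a_z)·ρ(t) with ρ(t) := (s·ln γ)/(4c)/√(1 - G(t)²) is a probability density on [-1,1]: it is nonnegative and integrates to 1. -/

import Mathlib

/-! With `a := artanh c` we have `log γ = 2a`, so `G t = tanh (a t)` and
`1 / √(1 - G t ^ 2) = cosh (a t)`; hence `ρa t = (a s / 2c) (cosh (a t) + a_z sinh (a t))`.
The odd `sinh` term integrates to `0` over `[-1, 1]`, the `cosh` term to `2 sinh a / a`,
and `sinh (artanh c) = c / s` makes the total mass `1`. -/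

open Real

theorem rpow_sub_one_div_rpow_add_one {x : ℝ} (hx : 0 < x) (t : ℝ) :
    (x ^ t - 1) / (x ^ t + 1) = tanh (log x * t / 2) := by
  have h2 : x ^ t = exp (log x * t / 2) ^ 2 := by
    rw [rpow_def_of_pos hx, ← exp_nat_mul]; push_cast; ring_nf
  rw [h2, tanh_eq, exp_neg]
  have := exp_pos (log x * t / 2)
  field_simp

theorem one_div_sqrt_one_sub_tanh_sq (x : ℝ) : 1 / √(1 - tanh x ^ 2) = cosh x := by
  have hcosh := cosh_pos x
  have h : 1 - tanh x ^ 2 = (cosh x)⁻¹ ^ 2 := by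
    rw [tanh_eq_sinh_div_cosh, div_pow, inv_pow, cosh_sq]
    field_simp
    ring
  rw [h, sqrt_sq (inv_nonneg.2 hcosh.le), one_div, inv_inv]

theorem log_one_add_div_one_sub {c : ℝ} (hc : c ∈ Set.Ioo (-1 : ℝ) 1) :
    log ((1 + c) / (1 - c)) = 2 * artanh c := by
  rw [artanh_eq_half_log (Set.Ioo_subset_Icc_self hc)]; ring

theorem Function.Odd.intervalIntegral_neg_self_eq_zero {f : ℝ → ℝ} (hf : Function.Odd f)
    (b : ℝ) : ∫ x in -b..b, f x = 0 := by
  have h : ∫ x in -b..b, f x = -∫ x in -b..b, f x := by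
    conv_lhs => rw [← neg_neg b, ← intervalIntegral.integral_comp_neg]
    simp only [hf _, intervalIntegral.integral_neg, neg_neg]
  linarith

theorem integral_cosh_mul_neg_self {a : ℝ} (ha : a ≠ 0) (b : ℝ) :
    ∫ t in -b..b, cosh (a * t) = 2 * sinh (a * b) / a := by
  rw [intervalIntegral.integral_comp_mul_left (fun x => cosh x) ha,
    intervalIntegral.integral_eq_sub_of_hasDerivAt (fun x _ => hasDerivAt_sinh x)
      (continuous_cosh.intervalIntegrable _ _), mul_neg, sinh_neg, smul_eq_mul]
  ring

theorem integral_cosh_add_mul_sinh {a : ℝ} (ha : a ≠ 0) (k b : ℝ) :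
    ∫ t in -b..b, (cosh (a * t) + k * sinh (a * t)) = 2 * sinh (a * b) / a := by
  have hsinh : Function.Odd fun t => sinh (a * t) := fun t => by simp [mul_neg, sinh_neg]
  rw [intervalIntegral.integral_add (Continuous.intervalIntegrable (by fun_prop) _ _)
      (Continuous.intervalIntegrable (by fun_prop) _ _),
    intervalIntegral.integral_const_mul, hsinh.intervalIntegral_neg_self_eq_zero,
    integral_cosh_mul_neg_self ha, mul_zero, add_zero]

theorem rho_a_is_density (c : ℝ) (hc : c ∈ Set.Ioo (0:ℝ) 1)
    (s : ℝ) (hs : s = Real.sqrt (1 - c ^ 2))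
    (γ : ℝ) (hγ : γ = (1 + c) / (1 - c))
    (G : ℝ → ℝ) (hG : ∀ t : ℝ, G t = (γ ^ t - 1) / (γ ^ t + 1))
    (ρ : ℝ → ℝ) (hρ : ∀ t : ℝ, ρ t = s * Real.log γ / (4 * c) * (1 / Real.sqrt (1 - G t ^ 2)))
    (az : ℝ) (haz : az ∈ Set.Icc (-1 : ℝ) 1)
    (ρa : ℝ → ℝ) (hρa : ∀ t : ℝ, ρa t = (1 + G t * az) * ρ t) :
    (∀ t ∈ Set.Icc (-1 : ℝ) 1, 0 ≤ ρa t) ∧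
      ∫ t in (-1 : ℝ)..1, ρa t = 1 := by
  obtain ⟨hc0, hc1⟩ := hc
  have hc' : c ∈ Set.Ioo (-1 : ℝ) 1 := ⟨by linarith, hc1⟩
  set a := artanh c
  have ha : 0 < a := artanh_pos ⟨hc0, hc1⟩
  have hs0 : 0 < s := hs ▸ sqrt_pos.2 (by nlinarith)
  have hlog : log γ = 2 * a := hγ ▸ log_one_add_div_one_sub hc'
  have hγ0 : 0 < γ := hγ ▸ div_pos (by linarith) (by linarith)
  have hGt (t : ℝ) : G t = tanh (a * t) := by
    rw [hG, rpow_sub_one_div_rpow_add_one hγ0, hlog]; ring_nf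
  have hρt (t : ℝ) : ρ t = a * s / (2 * c) * cosh (a * t) := by
    rw [hρ, hGt, one_div_sqrt_one_sub_tanh_sq, hlog]; ring
  have hK : 0 ≤ a * s / (2 * c) := by positivity
  constructor
  · intro t _
    have htanh := abs_le.1 (abs_tanh_lt_one (a * t)).le
    have hfac : 0 ≤ 1 + tanh (a * t) * az := by
      nlinarith [haz.1, haz.2]
    rw [hρa, hGt, hρt]
    exact mul_nonneg hfac (mul_nonneg hK (cosh_pos _).le)
  · have hρat (t : ℝ) : ρa t = a * s / (2 * c) * (cosh (a * t) + az * sinh (a * t)) := by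
      rw [hρa, hGt, hρt, tanh_eq_sinh_div_cosh]
      field_simp [(cosh_pos (a * t)).ne']
    simp_rw [hρat]
    rw [intervalIntegral.integral_const_mul, integral_cosh_add_mul_sinh ha.ne', mul_one,
      sinh_artanh hc', ← hs]
    field_simp
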